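/- Let T_n^k = {1,3,...,2k-1} ∪ {2k,...,2(k+n-1)}. Then sum_{n>=1} Lambda_{T_n^k} u^{n-1} = 1 + sum_{n>=2} [(y+xbar)^{(n-2)} Lambda_{T_2^k}(x+n-2, y, z, xbar+n-2, ybar, zbar) u^{n-1}] / prod_{i=0}^{n-2} (1 - (ybar - y - (xbar+i)) u), where a^{(n)} = a(a+1)...(a+n-1). -/

import Mathlib

attribute [local instance] Classical.propDecidable

noncomputable section

/-- The second-largest even element of `S` (0 if there is none). -/
def sndEvenMax (S : Finset ℕ) : ℕ :=
  ((S.filter fun a => Even a).erase (S.sup id)).sup id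

/-- `S'`: the elements of `S` that are at most the second-largest even element. -/
def Sprime (S : Finset ℕ) : Finset ℕ := S.filter fun a => a ≤ sndEvenMax S

/-- Generalized surjective staircases on `S`: excedent maps from `S` onto the even
elements of `S`. -/
def Staircases (S : Finset ℕ) : Finset (↥S → ↥S) :=
  Finset.univ.filter fun f =>
    (∀ a : ↥S, (a : ℕ) ≤ (f a : ℕ) ∧ Even ((f a : ℕ))) ∧
    (∀ b : ↥S, Even (b : ℕ) → ∃ a : ↥S, f a = b)

/-- number of odd maxima -/
def moS (S : Finset ℕ) (f : ↥S → ↥S) : ℕ :=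
  (Finset.univ.filter fun a : ↥S =>
    (a : ℕ) ≤ sndEvenMax S ∧ Odd (a : ℕ) ∧ ((f a : ℕ) = S.sup id)).card

/-- number of even maxima -/
def meS (S : Finset ℕ) (f : ↥S → ↥S) : ℕ :=
  (Finset.univ.filter fun a : ↥S =>
    (a : ℕ) ≤ sndEvenMax S ∧ Even (a : ℕ) ∧ ((f a : ℕ) = S.sup id)).card

def IsFixedPtS (S : Finset ℕ) (f : ↥S → ↥S) (a : ↥S) : Prop :=
  (a : ℕ) ≤ sndEvenMax S ∧ Even (a : ℕ) ∧ f a = a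

/-- number of isolated fixed points -/
def fiS (S : Finset ℕ) (f : ↥S → ↥S) : ℕ :=
  (Finset.univ.filter fun a : ↥S =>
    IsFixedPtS S f a ∧ ∀ b : ↥S, f b = a → b = a).card

/-- number of doubled fixed points -/
def fdS (S : Finset ℕ) (f : ↥S → ↥S) : ℕ :=
  (Finset.univ.filter fun a : ↥S =>
    IsFixedPtS S f a ∧ ∃ b : ↥S, b ≠ a ∧ f b = a).card

/-- the least even element of `S` larger than `a` -/
def nextEven (S : Finset ℕ) (a : ℕ) : ℕ := sInf {b : ℕ | b ∈ S ∧ Even b ∧ a < b}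

def IsSurfixedPtS (S : Finset ℕ) (f : ↥S → ↥S) (a : ↥S) : Prop :=
  (a : ℕ) ≤ sndEvenMax S ∧ Odd (a : ℕ) ∧ (f a : ℕ) = nextEven S (a : ℕ)

/-- number of isolated surfixed points -/
def siS (S : Finset ℕ) (f : ↥S → ↥S) : ℕ :=
  (Finset.univ.filter fun a : ↥S =>
    IsSurfixedPtS S f a ∧ ∀ b : ↥S, f b = f a → b = a).card

/-- number of doubled surfixed points -/
def sdS (S : Finset ℕ) (f : ↥S → ↥S) : ℕ :=
  (Finset.univ.filter fun a : ↥S =>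
    IsSurfixedPtS S f a ∧ ∃ b : ↥S, b ≠ a ∧ f b = f a).card

/-- The generalized Dumont–Foata polynomial `Λ_S`, evaluated at elements of a
commutative ring. -/
def Lam (R : Type) [CommRing R] (S : Finset ℕ) (x y z xb yb zb : R) : R :=
  ∑ f ∈ Staircases S,
    x ^ moS S f * y ^ fdS S f * z ^ siS S f * xb ^ meS S f * yb ^ fiS S f * zb ^ sdS S f


/-- `T_n^k = {1,3,…,2k-1} ∪ {2k, 2k+2, …, 2(k+n-1)}`. -/
def Tnk (k n : ℕ) : Finset ℕ :=
  ((Finset.range k).image fun i => 2 * i + 1) ∪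
    ((Finset.range n).image fun i => 2 * k + 2 * i)

/-!
Deleting the maximum `M` of `T_{n+3}^k` is a bijection between staircases `f` on `T_{n+3}^k`
and pairs `(g, A)`: here `g` is the staircase on `T_{n+2}^k` obtained by redirecting to the
previous maximum `M'` everything that `f` sends to `M`, and `A = f⁻¹(M) \ {M}` is a proper subset
of `g⁻¹(M')` (proper because `M'` must keep a preimage under `f`). The odd and even points of `A`
are the odd and even maxima of `f`, while those of `Q = g⁻¹(M') \ {M'}` are the maxima of `g`;
`M'` is an isolated fixed point of `f` iff `A = Q`, and a doubled one iff `M' ∉ A ≠ Q`; all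
other fixed and surfixed points are those of `g`. Summing over `A ⊊ Q ∪ {M'}` gives
`Λ_{T_{n+3}}(x, x̄) = (y + x̄) Λ_{T_{n+2}}(x + 1, x̄ + 1) + (ȳ - y - x̄) Λ_{T_{n+2}}(x, x̄)`.

For `F(x, x̄) = ∑ₘ Λ_{T_{m+2}}(x, x̄) uᵐ` this says
`(1 - (ȳ - y - x̄) u) F(x, x̄) = Λ_{T_2}(x, x̄) + (y + x̄) u F(x + 1, x̄ + 1)`. Unrolling it
`N + 1` times leaves a remainder divisible by `u^{N+1}`, which gives the coefficient of `u^N`;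
`Λ_{T_1} = 1` supplies the constant term.
-/

open Finset

section Tnk

variable {k n : ℕ}

lemma mem_Tnk {a : ℕ} :
    a ∈ Tnk k n ↔ (a % 2 = 1 ∧ a < 2 * k) ∨ (a % 2 = 0 ∧ 2 * k ≤ a ∧ a < 2 * k + 2 * n) := by
  simp only [Tnk, mem_union, mem_image, mem_range]
  constructor
  · rintro (⟨i, hi, rfl⟩ | ⟨i, hi, rfl⟩) <;> omega
  · rintro (⟨h1, h2⟩ | ⟨h1, h2, h3⟩)
    · exact Or.inl ⟨a / 2, by omega, by omega⟩
    · exact Or.inr ⟨(a - 2 * k) / 2, by omega, by omega⟩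

lemma mem_Tnk_succ {a : ℕ} : a ∈ Tnk k (n + 1) ↔ a ∈ Tnk k n ∨ a = 2 * k + 2 * n := by
  simp only [mem_Tnk]
  omega

lemma sup_Tnk_succ : (Tnk k (n + 1)).sup id = 2 * k + 2 * n :=
  le_antisymm (Finset.sup_le fun a ha => by have := mem_Tnk.1 ha; simp only [id]; omega)
    (le_sup (f := id) (mem_Tnk_succ.2 (Or.inr rfl)))

lemma sndEvenMax_Tnk : sndEvenMax (Tnk k (n + 2)) = 2 * k + 2 * n := by
  rw [sndEvenMax, sup_Tnk_succ (n := n + 1)]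
  have hmem : 2 * k + 2 * n ∈ ((Tnk k (n + 2)).filter Even).erase (2 * k + 2 * (n + 1)) := by
    simp only [mem_erase, mem_filter, mem_Tnk, Nat.even_iff]
    omega
  refine le_antisymm (Finset.sup_le fun a ha => ?_) (le_sup (f := id) hmem)
  simp only [mem_erase, mem_filter, mem_Tnk, Nat.even_iff] at ha
  simp only [id]
  omega

lemma sndEvenMax_Tnk_one : sndEvenMax (Tnk k 1) = 0 := by
  rw [sndEvenMax, sup_Tnk_succ (n := 0)]
  refine Nat.eq_zero_of_le_zero (Finset.sup_le fun a ha => ?_)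
  simp only [mem_erase, mem_filter, mem_Tnk, Nat.even_iff] at ha
  omega

lemma nextEven_Tnk {a : ℕ} (hn : n ≠ 0) (ha : a < 2 * k) : nextEven (Tnk k n) a = 2 * k := by
  have h2k : 2 * k ∈ {b : ℕ | b ∈ Tnk k n ∧ Even b ∧ a < b} :=
    ⟨mem_Tnk.2 (by omega), even_two_mul k, ha⟩
  rw [nextEven]
  refine le_antisymm (Nat.sInf_le h2k) ?_
  obtain ⟨hb, hbe, hab⟩ := Nat.sInf_mem ⟨_, h2k⟩
  rw [mem_Tnk] at hb
  rw [Nat.even_iff] at hbe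
  omega

end Tnk

lemma mem_Staircases {S : Finset ℕ} {f : ↥S → ↥S} :
    f ∈ Staircases S ↔ (∀ a : ↥S, (a : ℕ) ≤ f a ∧ Even (f a : ℕ)) ∧
      ∀ b : ↥S, Even (b : ℕ) → ∃ a, f a = b := by
  simp [Staircases]

lemma Lam_eq_card_of_sndEvenMax_lt {R : Type} [CommRing R] {S : Finset ℕ}
    (h : ∀ a ∈ S, sndEvenMax S < a) (x y z xb yb zb : R) :
    Lam R S x y z xb yb zb = #(Staircases S) := by
  have hS : ∀ a : ↥S, ¬ (a : ℕ) ≤ sndEvenMax S := fun a => not_le.2 (h a a.2)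
  simp [Lam, moS, meS, fiS, fdS, siS, sdS, IsFixedPtS, IsSurfixedPtS, hS]

lemma Staircases_Tnk_one (k : ℕ) :
    Staircases (Tnk k 1) = {fun _ => ⟨2 * k, mem_Tnk.2 (by omega)⟩} := by
  ext f
  simp only [mem_singleton, mem_Staircases, Nat.even_iff]
  constructor
  · rintro ⟨hf, -⟩
    funext a
    have := mem_Tnk.1 (f a).2
    exact Subtype.ext (by have := (hf a).2; dsimp only; omega)
  · rintro rfl
    refine ⟨fun a => ⟨by have := mem_Tnk.1 a.2; dsimp only; omega, by dsimp only; omega⟩,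
      fun b hb => ⟨b, Subtype.ext ?_⟩⟩
    have := mem_Tnk.1 b.2
    dsimp only
    omega

lemma Lam_Tnk_one {R : Type} [CommRing R] {k : ℕ} (hk : 1 ≤ k) (x y z xb yb zb : R) :
    Lam R (Tnk k 1) x y z xb yb zb = 1 := by
  rw [Lam_eq_card_of_sndEvenMax_lt, Staircases_Tnk_one, card_singleton, Nat.cast_one]
  intro a ha
  have := mem_Tnk.1 ha
  rw [sndEvenMax_Tnk_one]
  omega

namespace Tnk

variable {k n : ℕ}

def incl (a : ↥(Tnk k n)) : ↥(Tnk k (n + 1)) := ⟨a, mem_Tnk_succ.2 (Or.inl a.2)⟩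

def top (k n : ℕ) : ↥(Tnk k (n + 1)) := ⟨2 * k + 2 * n, mem_Tnk_succ.2 (Or.inr rfl)⟩

@[simp] lemma coe_incl (a : ↥(Tnk k n)) : (incl a : ℕ) = a := rfl

@[simp] lemma coe_top : (top k n : ℕ) = 2 * k + 2 * n := rfl

@[simp] lemma coe_eq_top_iff {b : ↥(Tnk k (n + 1))} : (b : ℕ) = 2 * k + 2 * n ↔ b = top k n := by
  rw [← coe_top, Subtype.coe_inj]

@[simp] lemma even_top : Even (2 * k + 2 * n) := ⟨k + n, by ring⟩

lemma incl_injective : Function.Injective (incl : ↥(Tnk k n) → ↥(Tnk k (n + 1))) :=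
  fun _ _ h => Subtype.ext (congrArg Subtype.val h :)

@[simp] lemma incl_inj {a b : ↥(Tnk k n)} : incl a = incl b ↔ a = b := incl_injective.eq_iff

lemma lt_top (a : ↥(Tnk k n)) : (a : ℕ) < top k n := by
  have := mem_Tnk.1 a.2
  simp only [coe_top]
  omega

lemma le_top (a : ↥(Tnk k (n + 1))) : (a : ℕ) ≤ top k n := by
  have := mem_Tnk.1 a.2
  simp only [coe_top]
  omega

lemma coe_le_iff_ne_top (a : ↥(Tnk k (n + 2))) :
    (a : ℕ) ≤ 2 * k + 2 * n ↔ a ≠ top k (n + 1) := by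
  rw [← Subtype.coe_ne_coe, coe_top]
  have := mem_Tnk.1 a.2
  omega

@[simp] lemma incl_ne_top (a : ↥(Tnk k n)) : incl a ≠ top k n :=
  fun h => (lt_top a).ne (congrArg Subtype.val h)

@[simp] lemma top_ne_incl (a : ↥(Tnk k n)) : top k n ≠ incl a := (incl_ne_top a).symm

def succEquiv (k n : ℕ) : Option ↥(Tnk k n) ≃ ↥(Tnk k (n + 1)) where
  toFun o := o.elim (top k n) incl
  invFun b := if h : (b : ℕ) ∈ Tnk k n then some ⟨b, h⟩ else none
  left_inv o := by
    cases o with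
    | none => simp [mem_Tnk]
    | some a => simp [a.2]
  right_inv b := by
    by_cases h : (b : ℕ) ∈ Tnk k n
    · simp [h, incl]
    · simp only [h, dite_false, Option.elim_none]
      exact Subtype.ext ((mem_Tnk_succ.1 b.2).resolve_left h).symm

@[simp] lemma succEquiv_symm_top : (succEquiv k n).symm (top k n) = none :=
  (succEquiv k n).symm_apply_eq.2 rfl

@[simp] lemma succEquiv_symm_incl (a : ↥(Tnk k n)) : (succEquiv k n).symm (incl a) = some a :=
  (succEquiv k n).symm_apply_eq.2 rfl

lemma eq_top_or_eq_incl (b : ↥(Tnk k (n + 1))) : b = top k n ∨ ∃ a, b = incl a := by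
  obtain ⟨_ | a, rfl⟩ := (succEquiv k n).surjective b
  exacts [Or.inl rfl, Or.inr ⟨a, rfl⟩]

lemma forall_succ {p : ↥(Tnk k (n + 1)) → Prop} :
    (∀ b, p b) ↔ (∀ a, p (incl a)) ∧ p (top k n) := by
  rw [← (succEquiv k n).forall_congr_right, Option.forall, and_comm]
  rfl

lemma exists_succ {p : ↥(Tnk k (n + 1)) → Prop} :
    (∃ b, p b) ↔ (∃ a, p (incl a)) ∨ p (top k n) := by
  rw [← (succEquiv k n).exists_congr_right, Option.exists, or_comm]
  rfl

lemma card_filter_succ (p : ↥(Tnk k (n + 1)) → Prop) [DecidablePred p] :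
    #(univ.filter p) = #(univ.filter fun a => p (incl a)) + if p (top k n) then 1 else 0 := by
  simp only [card_filter]
  rw [← (succEquiv k n).sum_comp, Fintype.sum_option, add_comm]
  rfl

lemma apply_top_of_mem_Staircases {f : ↥(Tnk k (n + 1)) → ↥(Tnk k (n + 1))}
    (hf : f ∈ Staircases (Tnk k (n + 1))) : f (top k n) = top k n :=
  Subtype.ext (le_antisymm (le_top _) ((mem_Staircases.1 hf).1 _).1)

lemma not_isFixedPtS_top (f : ↥(Tnk k (n + 2)) → ↥(Tnk k (n + 2))) :
    ¬ IsFixedPtS (Tnk k (n + 2)) f (top k (n + 1)) := by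
  simp [IsFixedPtS, sndEvenMax_Tnk]

lemma not_isSurfixedPtS_top (f : ↥(Tnk k (n + 2)) → ↥(Tnk k (n + 2))) :
    ¬ IsSurfixedPtS (Tnk k (n + 2)) f (top k (n + 1)) := by
  simp [IsSurfixedPtS, sndEvenMax_Tnk]

def topFiber (g : ↥(Tnk k (n + 1)) → ↥(Tnk k (n + 1))) : Finset ↥(Tnk k (n + 1)) :=
  univ.filter fun a => g a = top k n

@[simp] lemma mem_topFiber {g : ↥(Tnk k (n + 1)) → ↥(Tnk k (n + 1))} {a : ↥(Tnk k (n + 1))} :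
    a ∈ topFiber g ↔ g a = top k n := by
  simp [topFiber]

/-- Agrees with `g` on `T_{n+1}`, except that it sends `A` to the new maximum. -/
def extend (g : ↥(Tnk k (n + 1)) → ↥(Tnk k (n + 1))) (A : Finset ↥(Tnk k (n + 1))) :
    ↥(Tnk k (n + 2)) → ↥(Tnk k (n + 2)) := fun b =>
  ((succEquiv k (n + 1)).symm b).elim (top k (n + 1))
    fun a => if a ∈ A then top k (n + 1) else incl (g a)

/-- Redirects to the maximum of `T_{n+1}` whatever `f` sends to the maximum of `T_{n+2}`. -/
def restrict (f : ↥(Tnk k (n + 2)) → ↥(Tnk k (n + 2))) :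
    ↥(Tnk k (n + 1)) → ↥(Tnk k (n + 1)) :=
  fun a => ((succEquiv k (n + 1)).symm (f (incl a))).getD (top k n)

def topFiberBelow (f : ↥(Tnk k (n + 2)) → ↥(Tnk k (n + 2))) : Finset ↥(Tnk k (n + 1)) :=
  univ.filter fun a => f (incl a) = top k (n + 1)

@[simp] lemma mem_topFiberBelow {f : ↥(Tnk k (n + 2)) → ↥(Tnk k (n + 2))}
    {a : ↥(Tnk k (n + 1))} : a ∈ topFiberBelow f ↔ f (incl a) = top k (n + 1) := by
  simp [topFiberBelow]

section extend

variable {g : ↥(Tnk k (n + 1)) → ↥(Tnk k (n + 1))} {A : Finset ↥(Tnk k (n + 1))}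

@[simp] lemma extend_top : extend g A (top k (n + 1)) = top k (n + 1) := by
  simp [extend]

lemma extend_incl (a : ↥(Tnk k (n + 1))) :
    extend g A (incl a) = if a ∈ A then top k (n + 1) else incl (g a) := by
  simp [extend]

@[simp] lemma extend_incl_eq_top_iff {a : ↥(Tnk k (n + 1))} :
    extend g A (incl a) = top k (n + 1) ↔ a ∈ A := by
  rw [extend_incl]
  split_ifs <;> simp [*]

@[simp] lemma extend_incl_eq_incl_iff {a c : ↥(Tnk k (n + 1))} :
    extend g A (incl a) = incl c ↔ a ∉ A ∧ g a = c := by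
  rw [extend_incl]
  split_ifs <;> simp [*]

lemma extend_mem_Staircases (hg : g ∈ Staircases (Tnk k (n + 1))) (hA : A ⊂ topFiber g) :
    extend g A ∈ Staircases (Tnk k (n + 2)) := by
  obtain ⟨hexc, hsurj⟩ := mem_Staircases.1 hg
  refine mem_Staircases.2 ⟨forall_succ.2 ⟨fun a => ?_, by simp⟩,
    forall_succ.2 ⟨fun c hc => ?_, fun _ => ⟨_, extend_top⟩⟩⟩
  · rw [extend_incl]
    split_ifs
    · exact ⟨le_top _, even_top⟩
    · exact hexc a
  · by_cases hct : c = top k n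
    · obtain ⟨a, haP, haA⟩ := exists_of_ssubset hA
      exact ⟨incl a, by simp_all⟩
    · obtain ⟨a, rfl⟩ := hsurj c hc
      have ha : a ∉ A := fun h => hct (mem_topFiber.1 (hA.subset h))
      exact ⟨incl a, by simp [ha]⟩

end extend

section restrict

variable {f : ↥(Tnk k (n + 2)) → ↥(Tnk k (n + 2))} {a : ↥(Tnk k (n + 1))}

lemma restrict_of_eq_top (h : f (incl a) = top k (n + 1)) : restrict f a = top k n := by
  simp [restrict, h]

lemma incl_restrict_of_ne_top (h : f (incl a) ≠ top k (n + 1)) :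
    incl (restrict f a) = f (incl a) := by
  obtain ⟨_ | c, hc⟩ := (succEquiv k (n + 1)).surjective (f (incl a))
  · exact absurd hc.symm h
  · rw [restrict, ← hc, Equiv.symm_apply_apply, Option.getD_some]
    rfl

lemma exists_apply_incl_eq_incl (hf : f ∈ Staircases (Tnk k (n + 2)))
    {c : ↥(Tnk k (n + 1))} (hc : Even (c : ℕ)) : ∃ a, f (incl a) = incl c := by
  obtain ⟨b, hb⟩ := (mem_Staircases.1 hf).2 (incl c) hc
  obtain rfl | ⟨a, rfl⟩ := eq_top_or_eq_incl b
  · simp [apply_top_of_mem_Staircases hf] at hb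
  · exact ⟨a, hb⟩

lemma restrict_mem_Staircases (hf : f ∈ Staircases (Tnk k (n + 2))) :
    restrict f ∈ Staircases (Tnk k (n + 1)) := by
  refine mem_Staircases.2 ⟨fun a => ?_, fun c hc => ?_⟩
  · by_cases h : f (incl a) = top k (n + 1)
    · rw [restrict_of_eq_top h]
      exact ⟨le_top _, even_top⟩
    · simpa [← incl_restrict_of_ne_top h] using (mem_Staircases.1 hf).1 (incl a)
  · obtain ⟨a, ha⟩ := exists_apply_incl_eq_incl hf hc
    exact ⟨a, incl_injective (by rw [incl_restrict_of_ne_top (by simp [ha]), ha])⟩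

lemma topFiberBelow_ssubset (hf : f ∈ Staircases (Tnk k (n + 2))) :
    topFiberBelow f ⊂ topFiber (restrict f) := by
  refine (ssubset_iff_of_subset fun a ha => ?_).2 ?_
  · exact mem_topFiber.2 (restrict_of_eq_top (mem_topFiberBelow.1 ha))
  · obtain ⟨a, ha⟩ := exists_apply_incl_eq_incl hf (c := top k n) even_top
    refine ⟨a, mem_topFiber.2 (incl_injective ?_), by simp [ha]⟩
    rw [incl_restrict_of_ne_top (by simp [ha]), ha]

lemma extend_restrict (hf : f ∈ Staircases (Tnk k (n + 2))) :
    extend (restrict f) (topFiberBelow f) = f := by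
  funext b
  obtain rfl | ⟨a, rfl⟩ := eq_top_or_eq_incl b
  · rw [extend_top, apply_top_of_mem_Staircases hf]
  · rw [extend_incl]
    split_ifs with ha
    · exact (mem_topFiberBelow.1 ha).symm
    · exact incl_restrict_of_ne_top (by simpa using ha)

end restrict

lemma restrict_extend {g : ↥(Tnk k (n + 1)) → ↥(Tnk k (n + 1))} {A : Finset ↥(Tnk k (n + 1))}
    (hA : A ⊆ topFiber g) : restrict (extend g A) = g := by
  funext a
  by_cases ha : a ∈ A
  · rw [restrict_of_eq_top (by simpa), mem_topFiber.1 (hA ha)]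
  · exact incl_injective (by rw [incl_restrict_of_ne_top (by simpa), extend_incl, if_neg ha])

lemma topFiberBelow_extend {g : ↥(Tnk k (n + 1)) → ↥(Tnk k (n + 1))}
    {A : Finset ↥(Tnk k (n + 1))} : topFiberBelow (extend g A) = A := by
  ext a
  simp

lemma sum_Staircases_succ {M : Type*} [AddCommMonoid M]
    (w : (↥(Tnk k (n + 2)) → ↥(Tnk k (n + 2))) → M) :
    ∑ f ∈ Staircases (Tnk k (n + 2)), w f =
      ∑ g ∈ Staircases (Tnk k (n + 1)), ∑ A ∈ (topFiber g).ssubsets, w (extend g A) := by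
  rw [sum_sigma']
  refine sum_nbij' (fun f => ⟨restrict f, topFiberBelow f⟩) (fun p => extend p.1 p.2)
    (fun f hf => ?_) (fun p hp => ?_) (fun f hf => ?_) (fun p hp => ?_) (fun f hf => ?_)
  · exact mem_sigma.2 ⟨restrict_mem_Staircases hf, mem_ssubsets.2 (topFiberBelow_ssubset hf)⟩
  · obtain ⟨hg, hA⟩ := mem_sigma.1 hp
    exact extend_mem_Staircases hg (mem_ssubsets.1 hA)
  · exact extend_restrict hf
  · obtain ⟨hg, hA⟩ := mem_sigma.1 hp
    exact Sigma.ext (restrict_extend (mem_ssubsets.1 hA).subset) (heq_of_eq topFiberBelow_extend)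
  · rw [extend_restrict hf]

end Tnk

lemma Finset.eq_erase_iff_of_subset {α : Type*} [DecidableEq α] {A P : Finset α} {m : α}
    (hA : A ⊆ P) : (m ∉ A ∧ ∀ b ∈ P, b ∉ A → b = m) ↔ A = P.erase m := by
  constructor
  · rintro ⟨hm, h⟩
    ext b
    rw [mem_erase]
    exact ⟨fun hb => ⟨fun hbm => hm (hbm ▸ hb), hA hb⟩,
      fun ⟨hbm, hb⟩ => by_contra fun hbA => hbm (h b hb hbA)⟩
  · rintro rfl
    simp +contextual

namespace Tnk

variable {k n : ℕ} {g : ↥(Tnk k (n + 2)) → ↥(Tnk k (n + 2))} {A : Finset ↥(Tnk k (n + 2))}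

lemma not_mem_of_apply_ne_top (hA : A ⊆ topFiber g) {b : ↥(Tnk k (n + 2))}
    (hb : g b ≠ top k (n + 1)) : b ∉ A :=
  fun h => hb (mem_topFiber.1 (hA h))

lemma extend_incl_eq_incl_iff_of_ne_top (hA : A ⊆ topFiber g) {b c : ↥(Tnk k (n + 2))}
    (hc : c ≠ top k (n + 1)) : extend g A (incl b) = incl c ↔ g b = c := by
  rw [extend_incl_eq_incl_iff]
  exact ⟨And.right, fun hb => ⟨not_mem_of_apply_ne_top hA (hb ▸ hc), hb⟩⟩

lemma forall_extend_eq_incl_iff (hA : A ⊆ topFiber g) {c : ↥(Tnk k (n + 2))}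
    (hc : c ≠ top k (n + 1)) {p : ↥(Tnk k (n + 3)) → Prop} :
    (∀ b, extend g A b = incl c → p b) ↔ ∀ b, g b = c → p (incl b) := by
  rw [forall_succ (n := n + 2)]
  simp [extend_incl_eq_incl_iff_of_ne_top hA hc]

lemma exists_extend_eq_incl_iff (hA : A ⊆ topFiber g) {c : ↥(Tnk k (n + 2))}
    (hc : c ≠ top k (n + 1)) {p : ↥(Tnk k (n + 3)) → Prop} :
    (∃ b, p b ∧ extend g A b = incl c) ↔ ∃ b, p (incl b) ∧ g b = c := by
  rw [exists_succ (n := n + 2)]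
  simp [extend_incl_eq_incl_iff_of_ne_top hA hc]

lemma forall_extend_eq_incl_top_iff :
    (∀ b, extend g A b = incl (top k (n + 1)) → b = incl (top k (n + 1))) ↔
      ∀ b ∈ topFiber g, b ∉ A → b = top k (n + 1) := by
  rw [forall_succ (n := n + 2)]
  simp only [extend_top, top_ne_incl, IsEmpty.forall_iff, and_true, extend_incl_eq_incl_iff,
    incl_inj, mem_topFiber, and_imp]
  exact forall_congr' fun b => imp.swap

lemma moS_extend :
    moS (Tnk k (n + 3)) (extend g A) = #(A.filter fun a : ↥(Tnk k (n + 2)) => Odd (a : ℕ)) := by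
  rw [moS, card_filter_succ (n := n + 2), sndEvenMax_Tnk (n := n + 1), sup_Tnk_succ (n := n + 2),
    if_neg (by simp), add_zero]
  congr 1
  ext a
  have ha : (a : ℕ) ≤ 2 * k + 2 * (n + 1) := le_top a
  simp [ha, and_comm]

lemma meS_extend :
    meS (Tnk k (n + 3)) (extend g A) = #(A.filter fun a : ↥(Tnk k (n + 2)) => Even (a : ℕ)) := by
  rw [meS, card_filter_succ (n := n + 2), sndEvenMax_Tnk (n := n + 1), sup_Tnk_succ (n := n + 2),
    if_neg (by simp), add_zero]
  congr 1
  ext a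
  have ha : (a : ℕ) ≤ 2 * k + 2 * (n + 1) := le_top a
  simp [ha, and_comm]

lemma moS_eq_card_topFiber_erase : moS (Tnk k (n + 2)) g =
    #(((topFiber g).erase (top k (n + 1))).filter fun a : ↥(Tnk k (n + 2)) => Odd (a : ℕ)) := by
  rw [moS, sndEvenMax_Tnk, sup_Tnk_succ (n := n + 1)]
  congr 1
  ext a
  simp only [coe_le_iff_ne_top, coe_eq_top_iff, mem_filter, mem_univ, true_and, mem_erase,
    mem_topFiber]
  tauto

lemma meS_eq_card_topFiber_erase : meS (Tnk k (n + 2)) g =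
    #(((topFiber g).erase (top k (n + 1))).filter fun a : ↥(Tnk k (n + 2)) => Even (a : ℕ)) := by
  rw [meS, sndEvenMax_Tnk, sup_Tnk_succ (n := n + 1)]
  congr 1
  ext a
  simp only [coe_le_iff_ne_top, coe_eq_top_iff, mem_filter, mem_univ, true_and, mem_erase,
    mem_topFiber]
  tauto

lemma apply_ne_top_of_isSurfixedPtS {a : ↥(Tnk k (n + 2))}
    (h : IsSurfixedPtS (Tnk k (n + 2)) g a) : g a ≠ top k (n + 1) := by
  obtain ⟨-, ha, hga⟩ := h
  have := mem_Tnk.1 a.2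
  rw [nextEven_Tnk (by omega) (by rw [Nat.odd_iff] at ha; omega)] at hga
  rw [← Subtype.coe_ne_coe, hga, coe_top]
  omega

lemma isSurfixedPtS_extend_incl (hA : A ⊆ topFiber g) {a : ↥(Tnk k (n + 2))} :
    IsSurfixedPtS (Tnk k (n + 3)) (extend g A) (incl a) ↔ IsSurfixedPtS (Tnk k (n + 2)) g a := by
  unfold IsSurfixedPtS
  rw [sndEvenMax_Tnk (n := n + 1), sndEvenMax_Tnk, coe_incl]
  by_cases ha : Odd (a : ℕ)
  · have h2k : (a : ℕ) < 2 * k := by have := mem_Tnk.1 a.2; rw [Nat.odd_iff] at ha; omega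
    rw [nextEven_Tnk (by omega) h2k, nextEven_Tnk (by omega) h2k, extend_incl]
    by_cases haA : a ∈ A
    · simp [haA, mem_topFiber.1 (hA haA)]
    · rw [if_neg haA, coe_incl]
      exact ⟨fun ⟨_, h⟩ => ⟨by omega, h⟩, fun ⟨_, h⟩ => ⟨by omega, h⟩⟩
  · simp [ha]

lemma siS_extend (hA : A ⊆ topFiber g) :
    siS (Tnk k (n + 3)) (extend g A) = siS (Tnk k (n + 2)) g := by
  rw [siS, siS, card_filter_succ (n := n + 2), if_neg fun h => not_isSurfixedPtS_top _ h.1,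
    add_zero]
  congr 1
  ext a
  simp only [mem_filter, mem_univ, true_and, isSurfixedPtS_extend_incl hA]
  refine and_congr_right fun ha => ?_
  have hne := apply_ne_top_of_isSurfixedPtS ha
  rw [(extend_incl_eq_incl_iff_of_ne_top hA hne).2 rfl, forall_extend_eq_incl_iff hA hne]
  simp

lemma sdS_extend (hA : A ⊆ topFiber g) :
    sdS (Tnk k (n + 3)) (extend g A) = sdS (Tnk k (n + 2)) g := by
  rw [sdS, sdS, card_filter_succ (n := n + 2), if_neg fun h => not_isSurfixedPtS_top _ h.1,
    add_zero]
  congr 1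
  ext a
  simp only [mem_filter, mem_univ, true_and, isSurfixedPtS_extend_incl hA]
  refine and_congr_right fun ha => ?_
  have hne := apply_ne_top_of_isSurfixedPtS ha
  rw [(extend_incl_eq_incl_iff_of_ne_top hA hne).2 rfl, exists_extend_eq_incl_iff hA hne]
  simp

lemma isFixedPtS_extend_incl_incl (hA : A ⊆ topFiber g) {a : ↥(Tnk k (n + 1))} :
    IsFixedPtS (Tnk k (n + 3)) (extend g A) (incl (incl a)) ↔
      IsFixedPtS (Tnk k (n + 2)) g (incl a) := by
  unfold IsFixedPtS
  rw [sndEvenMax_Tnk (n := n + 1), sndEvenMax_Tnk,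
    extend_incl_eq_incl_iff_of_ne_top hA (incl_ne_top a)]
  have := le_top a
  simp only [coe_incl, coe_top] at this ⊢
  constructor <;> rintro ⟨-, h⟩ <;> exact ⟨by omega, h⟩

lemma isFixedPtS_extend_incl_top (hg : g ∈ Staircases (Tnk k (n + 2))) :
    IsFixedPtS (Tnk k (n + 3)) (extend g A) (incl (top k (n + 1))) ↔ top k (n + 1) ∉ A := by
  simp [IsFixedPtS, sndEvenMax_Tnk (n := n + 1), apply_top_of_mem_Staircases hg]

lemma fiS_extend (hg : g ∈ Staircases (Tnk k (n + 2))) (hA : A ⊆ topFiber g) :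
    fiS (Tnk k (n + 3)) (extend g A) =
      fiS (Tnk k (n + 2)) g + if A = (topFiber g).erase (top k (n + 1)) then 1 else 0 := by
  rw [fiS, fiS, card_filter_succ (n := n + 2), card_filter_succ (n := n + 1),
    card_filter_succ (n := n + 1)]
  simp only [not_isFixedPtS_top, false_and, if_false, add_zero]
  congr 1
  · congr 1
    ext a
    simp only [mem_filter, mem_univ, true_and, isFixedPtS_extend_incl_incl hA,
      forall_extend_eq_incl_iff hA (incl_ne_top a), incl_inj]
  · refine if_congr ?_ rfl rfl
    rw [isFixedPtS_extend_incl_top hg, forall_extend_eq_incl_top_iff, eq_erase_iff_of_subset hA]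

lemma fdS_extend (hg : g ∈ Staircases (Tnk k (n + 2))) (hA : A ⊆ topFiber g) :
    fdS (Tnk k (n + 3)) (extend g A) = fdS (Tnk k (n + 2)) g +
      if top k (n + 1) ∉ A ∧ A ≠ (topFiber g).erase (top k (n + 1)) then 1 else 0 := by
  rw [fdS, fdS, card_filter_succ (n := n + 2), card_filter_succ (n := n + 1),
    card_filter_succ (n := n + 1)]
  simp only [not_isFixedPtS_top, false_and, if_false, add_zero]
  congr 1
  · congr 1
    ext a
    simp only [mem_filter, mem_univ, true_and, isFixedPtS_extend_incl_incl hA,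
      exists_extend_eq_incl_iff hA (incl_ne_top a), ne_eq, incl_inj]
  · refine if_congr ?_ rfl rfl
    rw [isFixedPtS_extend_incl_top hg]
    refine and_congr_right fun hm => Iff.trans ?_ (eq_erase_iff_of_subset hA).not
    rw [← forall_extend_eq_incl_top_iff]
    simp only [hm, not_false_eq_true, true_and, not_forall]
    exact exists_congr fun b => by tauto

end Tnk

lemma Finset.sum_ssubsets_prod_mul_ite {α R : Type*} [DecidableEq α] [CommRing R]
    {P : Finset α} {m : α} (hm : m ∈ P) (w : α → R) (y yb : R) :
    ∑ A ∈ P.ssubsets, (∏ a ∈ A, w a) * (if m ∉ A ∧ A ≠ P.erase m then y else 1) *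
        (if A = P.erase m then yb else 1) =
      (y + w m) * ∏ a ∈ P.erase m, (1 + w a) + (yb - y - w m) * ∏ a ∈ P.erase m, w a := by
  set Q := P.erase m
  set F : Finset α → R := fun A => (∏ a ∈ A, w a) * (if m ∉ A ∧ A ≠ Q then y else 1) *
    (if A = Q then yb else 1)
  have hmQ : m ∉ Q := notMem_erase m P
  have hlow : ∀ B ∈ Q.powerset,
      F B = y * ∏ a ∈ B, w a + if B = Q then (yb - y) * ∏ a ∈ Q, w a else 0 := by
    intro B hB
    have hmB : m ∉ B := fun h => hmQ (mem_powerset.1 hB h)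
    by_cases hBQ : B = Q
    · subst hBQ
      simp only [F, hmB, not_false_eq_true, ne_eq, not_true_eq_false, and_false, if_false,
        if_true, mul_one]
      ring
    · simp [F, hmB, hBQ, mul_comm]
  have hhigh : ∀ B ∈ Q.powerset, F (insert m B) = w m * ∏ a ∈ B, w a := by
    intro B hB
    have hmB : m ∉ B := fun h => hmQ (mem_powerset.1 hB h)
    have hne : insert m B ≠ Q := fun h => hmQ (h ▸ mem_insert_self m B)
    simp [F, hne, prod_insert hmB]
  rw [ssubsets, eq_sub_of_add_eq (sum_erase_add _ F (mem_powerset_self P)), ← insert_erase hm,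
    hhigh Q (mem_powerset_self Q), sum_powerset_insert hmQ, sum_congr rfl hlow,
    sum_congr rfl hhigh, sum_add_distrib, sum_ite_eq', if_pos (mem_powerset_self Q), ← mul_sum,
    ← mul_sum, ← prod_one_add]
  ring

namespace Tnk

variable {R : Type} [CommRing R] {k n : ℕ}

lemma prod_ite_odd (s : Finset ↥(Tnk k n)) (x xb : R) :
    ∏ a ∈ s, (if Odd (a : ℕ) then x else xb) =
      x ^ #(s.filter fun a : ↥(Tnk k n) => Odd (a : ℕ)) *
        xb ^ #(s.filter fun a : ↥(Tnk k n) => Even (a : ℕ)) := by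
  simp only [prod_ite, prod_const, Nat.not_odd_iff_even]

lemma prod_topFiber_erase_ite_odd (g : ↥(Tnk k (n + 2)) → ↥(Tnk k (n + 2))) (x xb : R) :
    ∏ a ∈ (topFiber g).erase (top k (n + 1)), (if Odd (a : ℕ) then x else xb) =
      x ^ moS (Tnk k (n + 2)) g * xb ^ meS (Tnk k (n + 2)) g := by
  rw [prod_ite_odd, moS_eq_card_topFiber_erase, meS_eq_card_topFiber_erase]

lemma weight_extend {g : ↥(Tnk k (n + 2)) → ↥(Tnk k (n + 2))} {A : Finset ↥(Tnk k (n + 2))}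
    (hg : g ∈ Staircases (Tnk k (n + 2))) (hA : A ⊆ topFiber g) (x y z xb yb zb : R) :
    x ^ moS (Tnk k (n + 3)) (extend g A) * y ^ fdS (Tnk k (n + 3)) (extend g A) *
        z ^ siS (Tnk k (n + 3)) (extend g A) * xb ^ meS (Tnk k (n + 3)) (extend g A) *
        yb ^ fiS (Tnk k (n + 3)) (extend g A) * zb ^ sdS (Tnk k (n + 3)) (extend g A) =
      (∏ a ∈ A, if Odd (a : ℕ) then x else xb) *
        (if top k (n + 1) ∉ A ∧ A ≠ (topFiber g).erase (top k (n + 1)) then y else 1) *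
        (if A = (topFiber g).erase (top k (n + 1)) then yb else 1) *
        (y ^ fdS (Tnk k (n + 2)) g * z ^ siS (Tnk k (n + 2)) g *
          yb ^ fiS (Tnk k (n + 2)) g * zb ^ sdS (Tnk k (n + 2)) g) := by
  rw [moS_extend, meS_extend, fiS_extend hg hA, fdS_extend hg hA, siS_extend hA, sdS_extend hA,
    prod_ite_odd, pow_add, pow_add]
  split_ifs <;> ring

end Tnk

open Tnk in
theorem Lam_Tnk_add_three (R : Type) [CommRing R] (k n : ℕ) (x y z xb yb zb : R) :
    Lam R (Tnk k (n + 3)) x y z xb yb zb =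
      (y + xb) * Lam R (Tnk k (n + 2)) (x + 1) y z (xb + 1) yb zb +
        (yb - y - xb) * Lam R (Tnk k (n + 2)) x y z xb yb zb := by
  rw [Lam, sum_Staircases_succ (n := n + 1), Lam, Lam, mul_sum, mul_sum, ← sum_add_distrib]
  refine sum_congr rfl fun g hg => ?_
  have htop : top k (n + 1) ∈ topFiber g := mem_topFiber.2 (apply_top_of_mem_Staircases hg)
  have hshift (a : ↥(Tnk k (n + 2))) :
      1 + (if Odd (a : ℕ) then x else xb) = if Odd (a : ℕ) then x + 1 else xb + 1 := by
    split_ifs <;> ring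
  rw [sum_congr rfl fun A hA => weight_extend hg (mem_ssubsets.1 hA).subset x y z xb yb zb,
    ← sum_mul, sum_ssubsets_prod_mul_ite htop, if_neg (by simp)]
  simp only [hshift, prod_topFiber_erase_ite_odd]
  ring

namespace PowerSeries

variable {R : Type*} [CommRing R]

lemma invOfUnit_eq_of_mul_eq_one {φ ψ : R⟦X⟧} (hφ : constantCoeff φ = 1) (h : φ * ψ = 1) :
    invOfUnit φ 1 = ψ := by
  calc invOfUnit φ 1 = invOfUnit φ 1 * φ * ψ := by rw [mul_assoc, h, mul_one]
    _ = ψ := by rw [invOfUnit_mul φ 1 (by simpa using hφ), one_mul]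

lemma invOfUnit_prod_range_succ' (γ : ℕ → R) (q : ℕ) :
    invOfUnit (∏ j ∈ Finset.range (q + 1), (1 - C (γ j) * X)) 1 =
      invOfUnit (1 - C (γ 0) * X) 1 *
        invOfUnit (∏ j ∈ Finset.range q, (1 - C (γ (j + 1)) * X)) 1 := by
  refine invOfUnit_eq_of_mul_eq_one (by simp [map_prod]) ?_
  rw [Finset.prod_range_succ']
  calc _ = ((1 - C (γ 0) * X) * invOfUnit (1 - C (γ 0) * X) 1) *
        ((∏ j ∈ Finset.range q, (1 - C (γ (j + 1)) * X)) *
          invOfUnit (∏ j ∈ Finset.range q, (1 - C (γ (j + 1)) * X)) 1) := by ring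
    _ = 1 := by
      rw [mul_invOfUnit _ _ (by simp), mul_invOfUnit _ _ (by simp [map_prod]), one_mul]

variable {β γ : ℕ → R} {L : ℕ → ℕ → R}

lemma mk_eq_invOfUnit_mul_of_recurrence
    (hL : ∀ t m, L t (m + 1) = β t * L (t + 1) m + γ t * L t m) :
    mk (L 0) = invOfUnit (1 - C (γ 0) * X) 1 * (C (L 0 0) + C (β 0) * X * mk (L 1)) := by
  have hrec : (1 - C (γ 0) * X) * mk (L 0) = C (L 0 0) + C (β 0) * X * mk (L 1) := by
    ext (_ | m)
    · simp
    · simp [sub_mul, mul_assoc, hL]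
  rw [← hrec, ← mul_assoc, invOfUnit_mul _ _ (by simp), one_mul]

theorem mk_eq_sum_add_of_recurrence
    (hL : ∀ t m, L t (m + 1) = β t * L (t + 1) m + γ t * L t m) (n : ℕ) :
    mk (L 0) = ∑ i ∈ Finset.range n, C ((∏ j ∈ Finset.range i, β j) * L i 0) * X ^ i *
        invOfUnit (∏ j ∈ Finset.range (i + 1), (1 - C (γ j) * X)) 1 +
      C (∏ j ∈ Finset.range n, β j) * X ^ n *
        invOfUnit (∏ j ∈ Finset.range n, (1 - C (γ j) * X)) 1 * mk (L n) := by
  induction n generalizing β γ L with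
  | zero => simp [invOfUnit_eq_of_mul_eq_one (φ := (1 : R⟦X⟧)) (ψ := 1) (by simp) (by simp)]
  | succ n ih =>
    have ih' := ih (β := fun j => β (j + 1)) (γ := fun j => γ (j + 1)) (L := fun t => L (t + 1))
      fun t m => hL (t + 1) m
    set E := invOfUnit (1 - C (γ 0) * X) 1
    have hshift : ∀ i ∈ Finset.range n,
        C ((∏ j ∈ Finset.range (i + 1), β j) * L (i + 1) 0) * X ^ (i + 1) *
            invOfUnit (∏ j ∈ Finset.range (i + 1 + 1), (1 - C (γ j) * X)) 1 =
          E * C (β 0) * X * (C ((∏ j ∈ Finset.range i, β (j + 1)) * L (i + 1) 0) * X ^ i *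
            invOfUnit (∏ j ∈ Finset.range (i + 1), (1 - C (γ (j + 1)) * X)) 1) := by
      intro i _
      rw [invOfUnit_prod_range_succ' γ (i + 1), Finset.prod_range_succ', map_mul, map_mul,
        map_mul]
      ring
    rw [Finset.sum_range_succ', Finset.sum_congr rfl hshift, ← Finset.mul_sum,
      mk_eq_invOfUnit_mul_of_recurrence hL, ih', Finset.prod_range_succ' β,
      invOfUnit_prod_range_succ' γ n]
    simp only [Finset.prod_range_zero, Finset.range_one, Finset.prod_singleton, one_mul,
      pow_zero, mul_one, zero_add, map_mul]
    ring

theorem eq_coeff_sum_of_recurrence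
    (hL : ∀ t m, L t (m + 1) = β t * L (t + 1) m + γ t * L t m) (m : ℕ) :
    L 0 m = coeff m (∑ i ∈ Finset.range (m + 1),
      C ((∏ j ∈ Finset.range i, β j) * L i 0) * X ^ i *
        invOfUnit (∏ j ∈ Finset.range (i + 1), (1 - C (γ j) * X)) 1) := by
  rw [← coeff_mk m (L 0), mk_eq_sum_add_of_recurrence hL (m + 1), map_add, add_eq_left,
    mul_assoc, mul_assoc, mul_left_comm, coeff_X_pow_mul', if_neg (by omega)]

end PowerSeries

open PowerSeries in
theorem lam_Tnk_generating_function_general (k : ℕ) (hk : 1 ≤ k)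
    (x y z xb yb zb : MvPolynomial (Fin 6) ℤ) :
    ∀ N : ℕ,
      (PowerSeries.coeff N) (PowerSeries.mk fun j =>
          Lam (MvPolynomial (Fin 6) ℤ) (Tnk k (j + 1)) x y z xb yb zb) =
      (PowerSeries.coeff N) (1 : PowerSeries (MvPolynomial (Fin 6) ℤ)) +
      ∑ n ∈ Finset.Icc 2 (N + 1), (PowerSeries.coeff N)
        ((PowerSeries.C) ((∏ j ∈ Finset.range (n - 2), (y + xb + (j : _))) *
              Lam (MvPolynomial (Fin 6) ℤ) (Tnk k 2)
                (x + ((n - 2 : ℕ) : _)) y z (xb + ((n - 2 : ℕ) : _)) yb zb) *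
          PowerSeries.X ^ (n - 1) *
          PowerSeries.invOfUnit
            (∏ i ∈ Finset.range (n - 1),
              (1 - (PowerSeries.C) (yb - y - (xb + (i : _))) * PowerSeries.X)) 1) := by
  rintro (_ | m)
  · simp [Lam_Tnk_one hk]
  set L : ℕ → ℕ → MvPolynomial (Fin 6) ℤ :=
    fun t j => Lam _ (Tnk k (j + 2)) (x + t) y z (xb + t) yb zb with hLdef
  have hL : ∀ t j, L t (j + 1) = (y + xb + t) * L (t + 1) j + (yb - y - (xb + t)) * L t j := by
    simp only [hLdef, Lam_Tnk_add_three, Nat.cast_succ, add_assoc, implies_true]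
  rw [coeff_mk, coeff_one, if_neg m.succ_ne_zero, zero_add]
  calc _ = L 0 m := by simp [hLdef]
    _ = _ := eq_coeff_sum_of_recurrence hL m
    _ = _ := by
      rw [map_sum]
      refine sum_nbij' (· + 2) (· - 2) (fun i hi => ?_) (fun n hn => ?_) (fun i _ => rfl)
        (fun n hn => ?_) (fun i _ => ?_)
      · simp only [mem_range, mem_Icc] at hi ⊢; omega
      · simp only [mem_range, mem_Icc] at hn ⊢; omega
      · simp only [mem_Icc] at hn; omega
      · rw [show i + 2 - 1 = i + 1 by omega, add_tsub_cancel_right, pow_succ, ← mul_assoc,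
          mul_right_comm _ X, coeff_succ_mul_X]

open PowerSeries in
/-- The generating function formula
`∑_{n≥1} Λ_{T_n^k} u^{n-1} = 1 + ∑_{n≥2} (y+x̄)^{(n-2)} Λ_{T_2^k}(x+n-2, x̄+n-2) u^{n-1}
/ ∏_{i=0}^{n-2} (1 - (ȳ - y - (x̄+i)) u)`, stated coefficientwise (the coefficient of
`u^N` of the `n`-th summand on the right vanishes for `n > N+1`). -/
theorem lam_Tnk_generating_function (k : ℕ) (hk : 1 ≤ k)
    (x y z xb yb zb : MvPolynomial (Fin 6) ℤ)
    (hx : x = MvPolynomial.X 0) (hy : y = MvPolynomial.X 1) (hz : z = MvPolynomial.X 2)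
    (hxb : xb = MvPolynomial.X 3) (hyb : yb = MvPolynomial.X 4)
    (hzb : zb = MvPolynomial.X 5) :
    ∀ N : ℕ,
      (PowerSeries.coeff N) (PowerSeries.mk fun j =>
          Lam (MvPolynomial (Fin 6) ℤ) (Tnk k (j + 1)) x y z xb yb zb) =
      (PowerSeries.coeff N) (1 : PowerSeries (MvPolynomial (Fin 6) ℤ)) +
      ∑ n ∈ Finset.Icc 2 (N + 1), (PowerSeries.coeff N)
        ((PowerSeries.C) ((∏ j ∈ Finset.range (n - 2), (y + xb + (j : _))) *
              Lam (MvPolynomial (Fin 6) ℤ) (Tnk k 2)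
                (x + ((n - 2 : ℕ) : _)) y z (xb + ((n - 2 : ℕ) : _)) yb zb) *
          PowerSeries.X ^ (n - 1) *
          PowerSeries.invOfUnit
            (∏ i ∈ Finset.range (n - 1),
              (1 - (PowerSeries.C) (yb - y - (xb + (i : _))) * PowerSeries.X)) 1) :=
  lam_Tnk_generating_function_general k hk x y z xb yb zb

end
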